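/- arXiv:2008.09799 — 2 statements merged into one kernel-verified Lean document; each statement's English description precedes it below -/
import Mathlib

section
/- The function Ξ : [0,1] → ℝ defined by Ξ(t) = t²/3 - t/12 for t ∈ [0,1/2] and Ξ(t) = t²/3 + 5t/12 - 1/4 for t ∈ [1/2,1] is star-shaped along the line β = 0, i.e., for every t ∈ (0,1] and every s ∈ [0,t], Ξ(s) ≤ (s/t)·Ξ(t). -/
noncomputable def Xi (t : ℝ) : ℝ :=
  if t ≤ 1/2 then t^2/3 - t/12 else t^2/3 + 5*t/12 - 1/4

theorem xi_star_shaped_zero (t : ℝ) (ht : t ∈ Set.Ioc (0:ℝ) 1)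
    (s : ℝ) (hs : s ∈ Set.Icc (0:ℝ) t) :
    Xi s ≤ (s/t) * Xi t := by
  obtain ⟨ht0, ht1⟩ := ht
  obtain ⟨hs0, hst⟩ := hs
  rw [div_mul_eq_mul_div, le_div_iff₀ ht0]
  unfold Xi
  by_cases h1 : s ≤ 1/2 <;> by_cases h2 : t ≤ 1/2 <;> simp only [h1, h2, if_true, if_false]
  · nlinarith [mul_nonneg hs0 (sub_nonneg.2 hst), mul_nonneg (mul_nonneg hs0 ht0.le) (sub_nonneg.2 hst)]
  · nlinarith [mul_nonneg hs0 (sub_nonneg.2 hst), mul_nonneg hs0 (sub_nonneg.2 (not_le.1 h2).le), mul_nonneg (mul_nonneg hs0 ht0.le) (sub_nonneg.2 hst), mul_nonneg hs0 (mul_nonneg (sub_nonneg.2 (not_le.1 h2).le) ht0.le)]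
  · linarith
  · nlinarith [mul_nonneg (mul_nonneg hs0 ht0.le) (sub_nonneg.2 hst)]
end

section
/- The function Ξ : [0,1] → ℝ defined by Ξ(t) = t²/3 - t/12 for t ∈ [0,1/2] and Ξ(t) = t²/3 + 5t/12 - 1/4 for t ∈ [1/2,1] satisfies Ξ(1) = 1/2 and is star-shaped along the line β = 1: for every t ∈ [0,1) and s ∈ [t,1], the point (s, Ξ(s)) lies below the segment joining (t, Ξ(t)) to (1, 1/2), i.e., Ξ(s) ≤ Ξ(t) + ((1/2 - Ξ(t))/(1 - t))·(s - t). -/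
theorem xi_star_shaped_one :
    Xi 1 = 1/2 ∧
    ∀ t ∈ Set.Ico (0:ℝ) 1, ∀ s ∈ Set.Icc t 1,
      Xi s ≤ Xi t + ((1/2 - Xi t)/(1 - t)) * (s - t) := by
  constructor
  · norm_num [Xi]
  · rintro t ⟨ht0, ht1⟩ s ⟨hst, hs1⟩
    have h1t : (0:ℝ) < 1 - t := by linarith
    rw [div_mul_eq_mul_div, ← sub_le_iff_le_add', le_div_iff₀ h1t]
    unfold Xi
    split_ifs with hs ht <;> nlinarith [sq_nonneg (s - t), sq_nonneg (s + t), mul_nonneg (sub_nonneg.2 hst) (sub_nonneg.2 hs1)]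
end
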